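/- Let n > 0 and let f : {-1,1}^n → ℝ satisfy E[f] = 0. Write M = ‖f‖_∞ = max_x |f(x)|. Then there exist S ⊆ [n] and b ∈ {-1,1}^{S̄} such that the restriction g = f_{S|b} (fixing coordinates in S̄ to b) satisfies Var(g) ≥ M²/(4n) and |ĝ({i})| ≥ M/(2n) for every i ∈ S. -/

import Mathlib

open Finset

noncomputable section

/-- sign of a bit: `true` ↦ -1 (representing the bit -1), `false` ↦ 1. -/
def bsgn (b : Bool) : ℝ := if b then -1 else 1

/-- character χ_S(x) = ∏_{i ∈ S} x_i on the cube {-1,1}^n. -/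
def chiCube {n : ℕ} (S : Finset (Fin n)) (x : Fin n → Bool) : ℝ := ∏ i ∈ S, bsgn (x i)

/-- expectation under the uniform distribution on a finite type. -/
def expec {α : Type*} [Fintype α] (f : α → ℝ) : ℝ := (∑ x, f x) / (Fintype.card α)

/-- Fourier coefficient f̂(S) = E_x[f(x)·χ_S(x)]. -/
def fhat {n : ℕ} (f : (Fin n → Bool) → ℝ) (S : Finset (Fin n)) : ℝ :=
  expec fun x => f x * chiCube S x

/-- variance under the uniform distribution. -/
def cubeVar {α : Type*} [Fintype α] (f : α → ℝ) : ℝ :=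
  expec (fun x => f x ^ 2) - (expec f) ^ 2

/-- merge: equals `x` on `J` and `z` off `J`. -/
def mergeOn {n : ℕ} (J : Finset (Fin n)) (x z : Fin n → Bool) : Fin n → Bool :=
  fun i => if i ∈ J then x i else z i

/-!
Start from a point `x₀` where `|f|` is maximal, so that `g = f` deviates from its mean by `M`
at `x₀`. If every degree-one coefficient of the current restriction `g` is at least `A / (2m)` in
absolute value (`m = |S|`, `A` a lower bound for the deviation at `x₀`), Bessel's inequality gives
`Var g ≥ m (A / 2m)² = A² / 4m`. Otherwise fix a coordinate `i` with a small coefficient to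
`x₀ i`: this moves the mean by exactly `±ĝ({i})`, so the deviation at `x₀` drops by less than
`A / 2m`, and the bounds for `m - 1` coordinates and the new lower bound `A (2m - 1) / 2m` are at
least as strong as those for `m` and `A`. A restriction to no coordinates is constant, so the
descent stops before running out of coordinates.
-/

section Cube

variable {n : ℕ}

lemma bsgn_mul_self (c : Bool) : bsgn c * bsgn c = 1 := by
  cases c <;> norm_num [bsgn]

lemma bsgn_not (c : Bool) : bsgn (!c) = -bsgn c := by
  cases c <;> norm_num [bsgn]

lemma abs_bsgn (c : Bool) : |bsgn c| = 1 := by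
  cases c <;> norm_num [bsgn]

lemma bsgn_mul_bsgn_of_ne {c d : Bool} (h : c ≠ d) : bsgn c * bsgn d = -1 := by
  cases c <;> cases d <;> simp_all [bsgn]

def flipAt (i : Fin n) (x : Fin n → Bool) : Fin n → Bool :=
  Function.update x i (!x i)

lemma flipAt_involutive (i : Fin n) : Function.Involutive (flipAt i) := by
  intro x
  simp [flipAt]

lemma flipAt_apply_self (i : Fin n) (x : Fin n → Bool) : flipAt i x i = !x i := by
  simp [flipAt]

lemma flipAt_apply_of_ne {i j : Fin n} (h : j ≠ i) (x : Fin n → Bool) : flipAt i x j = x j := by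
  simp [flipAt, Function.update_of_ne h]

lemma sum_eq_zero_of_flipAt_neg (i : Fin n) {F : (Fin n → Bool) → ℝ}
    (h : ∀ x, F (flipAt i x) = -F x) : ∑ x, F x = 0 := by
  have hflip := (flipAt_involutive i).bijective.sum_comp F
  simp only [h, sum_neg_distrib] at hflip
  linarith

lemma sum_bsgn (i : Fin n) : ∑ x : Fin n → Bool, bsgn (x i) = 0 :=
  sum_eq_zero_of_flipAt_neg i fun x => by rw [flipAt_apply_self, bsgn_not]

lemma sum_bsgn_mul_bsgn (i j : Fin n) :
    ∑ x : Fin n → Bool, bsgn (x i) * bsgn (x j) =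
      if i = j then (Fintype.card (Fin n → Bool) : ℝ) else 0 := by
  split_ifs with h
  · subst h
    simp [bsgn_mul_self]
  · refine sum_eq_zero_of_flipAt_neg i fun x => ?_
    rw [flipAt_apply_self, flipAt_apply_of_ne (Ne.symm h), bsgn_not, neg_mul]

end Cube

section Expectation

variable {α : Type*} [Fintype α] [Nonempty α]

lemma sum_eq_card_mul_expec (g : α → ℝ) : ∑ x, g x = Fintype.card α * expec g := by
  have : (Fintype.card α : ℝ) ≠ 0 := by positivity
  rw [expec]
  field_simp

lemma expec_const (k : ℝ) : expec (fun _ : α => k) = k := by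
  have : (Fintype.card α : ℝ) ≠ 0 := by positivity
  rw [expec, sum_const, card_univ, nsmul_eq_mul]
  field_simp

lemma sum_sub_expec_sq (g : α → ℝ) :
    ∑ x, (g x - expec g) ^ 2 = Fintype.card α * cubeVar g := by
  simp only [sub_sq, sum_add_distrib, sum_sub_distrib, ← sum_mul, ← mul_sum, sum_const,
    card_univ, nsmul_eq_mul, sum_eq_card_mul_expec g, sum_eq_card_mul_expec (g · ^ 2), cubeVar]
  ring

end Expectation

section Fourier

variable {n : ℕ}

lemma card_mul_fhat_singleton (g : (Fin n → Bool) → ℝ) (i : Fin n) :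
    Fintype.card (Fin n → Bool) * fhat g {i} = ∑ x, g x * bsgn (x i) := by
  simp only [fhat, chiCube, expec, prod_singleton]
  exact mul_div_cancel₀ _ (by positivity)

lemma sum_sub_expec_mul_bsgn (g : (Fin n → Bool) → ℝ) (i : Fin n) :
    ∑ x, (g x - expec g) * bsgn (x i) = Fintype.card (Fin n → Bool) * fhat g {i} := by
  simp only [sub_mul, sum_sub_distrib, ← mul_sum, sum_bsgn, card_mul_fhat_singleton]
  ring

lemma sum_mul_sum_bsgn (h : (Fin n → Bool) → ℝ) (S : Finset (Fin n)) (a : Fin n → ℝ) :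
    ∑ x, h x * ∑ i ∈ S, a i * bsgn (x i) = ∑ i ∈ S, a i * ∑ x, h x * bsgn (x i) := by
  simp only [mul_sum]
  rw [sum_comm]
  refine sum_congr rfl fun i _ => sum_congr rfl fun x _ => ?_
  ring

theorem sum_sq_fhat_singleton_le_cubeVar (g : (Fin n → Bool) → ℝ) (S : Finset (Fin n)) :
    ∑ i ∈ S, fhat g {i} ^ 2 ≤ cubeVar g := by
  set N : ℝ := (Fintype.card (Fin n → Bool) : ℝ)
  set s : (Fin n → Bool) → ℝ := fun x => ∑ i ∈ S, fhat g {i} * bsgn (x i)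
  have hs_bsgn : ∀ j ∈ S, ∑ x, s x * bsgn (x j) = N * fhat g {j} := fun j hj =>
    calc ∑ x, s x * bsgn (x j) = ∑ x, bsgn (x j) * s x := by simp only [mul_comm]
      _ = ∑ i ∈ S, fhat g {i} * ∑ x : Fin n → Bool, bsgn (x j) * bsgn (x i) :=
        sum_mul_sum_bsgn _ _ _
      _ = N * fhat g {j} := by
        simp only [sum_bsgn_mul_bsgn, mul_ite, mul_zero, sum_ite_eq, if_pos hj]
        ring
  have hcross : ∑ x, (g x - expec g) * s x = N * ∑ i ∈ S, fhat g {i} ^ 2 := by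
    rw [sum_mul_sum_bsgn, mul_sum]
    exact sum_congr rfl fun i _ => by rw [sum_sub_expec_mul_bsgn]; ring
  have hsq : ∑ x, s x * s x = N * ∑ i ∈ S, fhat g {i} ^ 2 := by
    rw [sum_mul_sum_bsgn, mul_sum]
    exact sum_congr rfl fun i hi => by rw [hs_bsgn i hi]; ring
  have hresidual : 0 ≤ ∑ x, (g x - expec g - s x) ^ 2 := sum_nonneg fun _ _ => sq_nonneg _
  have hexpand : ∑ x, (g x - expec g - s x) ^ 2 =
      ∑ x, (g x - expec g) ^ 2 - 2 * ∑ x, (g x - expec g) * s x + ∑ x, s x * s x := by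
    rw [mul_sum, ← sum_sub_distrib, ← sum_add_distrib]
    exact sum_congr rfl fun x _ => by ring
  rw [hexpand, sum_sub_expec_sq, hcross, hsq] at hresidual
  have hN : 0 < N := by positivity
  nlinarith

lemma card_mul_sq_le_cubeVar {g : (Fin n → Bool) → ℝ} {S : Finset (Fin n)} {a : ℝ}
    (ha : 0 ≤ a) (h : ∀ i ∈ S, a ≤ |fhat g {i}|) : #S * a ^ 2 ≤ cubeVar g :=
  calc (#S : ℝ) * a ^ 2 = ∑ _i ∈ S, a ^ 2 := by rw [sum_const, nsmul_eq_mul]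
    _ ≤ ∑ i ∈ S, fhat g {i} ^ 2 :=
      sum_le_sum fun i hi => by simpa only [sq_abs] using pow_le_pow_left₀ ha (h i hi) 2
    _ ≤ cubeVar g := sum_sq_fhat_singleton_le_cubeVar g S

lemma expec_comp_update (g : (Fin n → Bool) → ℝ) (i : Fin n) (c : Bool) :
    expec (fun x => g (Function.update x i c)) = expec g + bsgn c * fhat g {i} := by
  set h : (Fin n → Bool) → ℝ := fun x => g (Function.update x i c)
  have h_odd : ∑ x, h x * bsgn (x i) = 0 :=
    sum_eq_zero_of_flipAt_neg i fun x => by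
      simp only [h, flipAt, Function.update_idem, Function.update_self, bsgn_not, mul_neg]
  -- `1 + bsgn c * bsgn (x i)` vanishes unless `x i = c`, where `h x = g x`.
  have h_agree : ∀ x, h x * (1 + bsgn c * bsgn (x i)) = g x * (1 + bsgn c * bsgn (x i)) := by
    intro x
    by_cases hx : x i = c
    · subst hx
      simp only [h, Function.update_eq_self]
    · rw [bsgn_mul_bsgn_of_ne (Ne.symm hx)]
      ring
  have hN : (Fintype.card (Fin n → Bool) : ℝ) ≠ 0 := by positivity
  apply mul_left_cancel₀ hN
  calc Fintype.card (Fin n → Bool) * expec h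
      = ∑ x, h x * (1 + bsgn c * bsgn (x i)) := by
        simp only [mul_add, mul_one, sum_add_distrib, mul_left_comm _ (bsgn c), ← mul_sum,
          h_odd, mul_zero, add_zero, sum_eq_card_mul_expec]
    _ = ∑ x, g x * (1 + bsgn c * bsgn (x i)) := sum_congr rfl fun x _ => h_agree x
    _ = ∑ x, g x + bsgn c * ∑ x, g x * bsgn (x i) := by
        simp only [mul_add, mul_one, sum_add_distrib, mul_left_comm _ (bsgn c), ← mul_sum]
    _ = Fintype.card (Fin n → Bool) * (expec g + bsgn c * fhat g {i}) := by
        rw [sum_eq_card_mul_expec g, ← card_mul_fhat_singleton]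
        ring

end Fourier

section Restriction

variable {n : ℕ}

/-- The restriction `f_{S|b}`. -/
def cubeRestrict (f : (Fin n → Bool) → ℝ) (S : Finset (Fin n)) (b : Fin n → Bool) :
    (Fin n → Bool) → ℝ :=
  fun x => f (mergeOn S x b)

lemma cubeRestrict_univ (f : (Fin n → Bool) → ℝ) (b : Fin n → Bool) :
    cubeRestrict f univ b = f :=
  funext fun x => congrArg f (funext fun j => by simp [mergeOn])

lemma cubeRestrict_empty (f : (Fin n → Bool) → ℝ) (b : Fin n → Bool) :
    cubeRestrict f ∅ b = fun _ => f b :=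
  funext fun x => congrArg f (funext fun j => by simp [mergeOn])

lemma cubeRestrict_erase_update (f : (Fin n → Bool) → ℝ) {S : Finset (Fin n)} {i : Fin n}
    (hi : i ∈ S) (b : Fin n → Bool) (c : Bool) :
    cubeRestrict f (S.erase i) (Function.update b i c) =
      fun x => cubeRestrict f S b (Function.update x i c) := by
  funext x
  simp only [cubeRestrict]
  congr 1
  funext j
  rcases eq_or_ne j i with rfl | hj
  · simp [mergeOn, hi]
  · simp [mergeOn, hj]

lemma abs_sub_expec_cubeRestrict_erase (f : (Fin n → Bool) → ℝ) {S : Finset (Fin n)}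
    {i : Fin n} (hi : i ∈ S) (b x₀ : Fin n → Bool) :
    |cubeRestrict f S b x₀ - expec (cubeRestrict f S b)| - |fhat (cubeRestrict f S b) {i}| ≤
      |cubeRestrict f (S.erase i) (Function.update b i (x₀ i)) x₀ -
        expec (cubeRestrict f (S.erase i) (Function.update b i (x₀ i)))| := by
  rw [cubeRestrict_erase_update f hi, expec_comp_update]
  dsimp only
  rw [Function.update_eq_self, sub_add_eq_sub_sub]
  simpa only [abs_mul, abs_bsgn, one_mul] using
    abs_sub_abs_le_abs_sub (cubeRestrict f S b x₀ - expec (cubeRestrict f S b))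
      (bsgn (x₀ i) * fhat (cubeRestrict f S b) {i})

lemma cubeRestrict_empty_sub_expec (f : (Fin n → Bool) → ℝ) (b x₀ : Fin n → Bool) :
    cubeRestrict f ∅ b x₀ - expec (cubeRestrict f ∅ b) = 0 := by
  rw [cubeRestrict_empty, expec_const, sub_self]

lemma sq_div_le_descent {m : ℝ} (hm : 0 < m) (A : ℝ) :
    A ^ 2 / (4 * (m + 1)) ≤ (A * (2 * m + 1) / (2 * (m + 1))) ^ 2 / (4 * m) := by
  rw [div_pow, div_div, div_le_div_iff₀ (by positivity) (by positivity)]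
  nlinarith [sq_nonneg A, mul_pos hm hm]

lemma div_le_descent {m A : ℝ} (hm : 0 < m) (hA : 0 ≤ A) :
    A / (2 * (m + 1)) ≤ A * (2 * m + 1) / (2 * (m + 1)) / (2 * m) := by
  rw [div_div, div_le_div_iff₀ (by positivity) (by positivity)]
  nlinarith

theorem exists_cubeRestrict_of_le_abs_sub_expec (f : (Fin n → Bool) → ℝ) (S : Finset (Fin n))
    (b x₀ : Fin n → Bool) {A : ℝ} (hA : 0 ≤ A)
    (hdev : A ≤ |cubeRestrict f S b x₀ - expec (cubeRestrict f S b)|) :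
    ∃ (T : Finset (Fin n)) (b' : Fin n → Bool),
      A ^ 2 / (4 * #S) ≤ cubeVar (cubeRestrict f T b') ∧
      ∀ i ∈ T, A / (2 * #S) ≤ |fhat (cubeRestrict f T b') {i}| := by
  induction hS : #S generalizing S b A with
  | zero =>
    -- both bounds are `_ / 0 = 0`
    refine ⟨S, b, by simpa using sum_sq_fhat_singleton_le_cubeVar (cubeRestrict f S b) ∅, ?_⟩
    simp [card_eq_zero.mp hS]
  | succ m ih =>
    push_cast
    by_cases hlarge : ∀ i ∈ S, A / (2 * (m + 1)) ≤ |fhat (cubeRestrict f S b) {i}|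
    · refine ⟨S, b, ?_, hlarge⟩
      have hvar := card_mul_sq_le_cubeVar (by positivity) hlarge
      rw [hS] at hvar
      push_cast at hvar
      calc A ^ 2 / (4 * (m + 1)) = (m + 1) * (A / (2 * (m + 1))) ^ 2 := by field_simp; ring
        _ ≤ _ := hvar
    push Not at hlarge
    obtain ⟨i, hi, hsmall⟩ := hlarge
    have hstep := abs_sub_expec_cubeRestrict_erase f hi b x₀
    have hcard : #(S.erase i) = m := by rw [card_erase_of_mem hi, hS, Nat.add_sub_cancel]
    set A' := A * (2 * m + 1) / (2 * (m + 1)) with hA'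
    have hA'_lt : A' < |cubeRestrict f (S.erase i) (Function.update b i (x₀ i)) x₀ -
        expec (cubeRestrict f (S.erase i) (Function.update b i (x₀ i)))| := by
      have : A' = A - A / (2 * (m + 1)) := by rw [hA']; field_simp; ring
      linarith
    have hA'_nonneg : 0 ≤ A' := by positivity
    have hm : 0 < m := by
      refine Nat.pos_of_ne_zero fun hm => ?_
      rw [card_eq_zero.mp (hcard.trans hm), cubeRestrict_empty_sub_expec, abs_zero] at hA'_lt
      linarith
    obtain ⟨T, b', hvar, hcoef⟩ := ih (S.erase i) _ hA'_nonneg hA'_lt.le hcard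
    refine ⟨T, b', (sq_div_le_descent (Nat.cast_pos.mpr hm) A).trans hvar,
      fun j hj => (div_le_descent (Nat.cast_pos.mpr hm) hA).trans (hcoef j hj)⟩

end Restriction

theorem stmt_8_general (n : ℕ) (f : (Fin n → Bool) → ℝ)
    (h0 : expec f = 0) (M : ℝ)
    (hM : M = univ.sup' Finset.univ_nonempty fun x : Fin n → Bool => |f x|) :
    ∃ (S : Finset (Fin n)) (b : Fin n → Bool),
      cubeVar (fun x => f (mergeOn S x b)) ≥ M ^ 2 / (4 * n) ∧
      ∀ i ∈ S, |fhat (fun x => f (mergeOn S x b)) {i}| ≥ M / (2 * n) := by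
  obtain ⟨x₀, -, hx₀⟩ := exists_mem_eq_sup' univ_nonempty fun x : Fin n → Bool => |f x|
  rw [hx₀] at hM
  have hdev : M ≤ |cubeRestrict f univ x₀ x₀ - expec (cubeRestrict f univ x₀)| := by
    rw [cubeRestrict_univ, h0, sub_zero, hM]
  obtain ⟨S, b, hvar, hcoef⟩ :=
    exists_cubeRestrict_of_le_abs_sub_expec f univ x₀ x₀ (hM ▸ abs_nonneg _) hdev
  rw [card_univ, Fintype.card_fin] at hvar hcoef
  exact ⟨S, b, hvar, hcoef⟩

theorem stmt_8 (n : ℕ) (hn : 0 < n) (f : (Fin n → Bool) → ℝ)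
    (h0 : expec f = 0) (M : ℝ)
    (hM : M = univ.sup' Finset.univ_nonempty fun x : Fin n → Bool => |f x|) :
    ∃ (S : Finset (Fin n)) (b : Fin n → Bool),
      cubeVar (fun x => f (mergeOn S x b)) ≥ M ^ 2 / (4 * n) ∧
      ∀ i ∈ S, |fhat (fun x => f (mergeOn S x b)) {i}| ≥ M / (2 * n) :=
  stmt_8_general n f h0 M hM
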